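/- (Score of the targeted Gaussian fluctuation likelihood equals the efficient influence function.) Assume additionally that σ²(A,X) ≥ c > 0 almost surely for some constant c. Define W(X) := (Ψ(X) − β₀^⊤ v(X)) v(X), Z(ε) := E_P[exp(ε^⊤ G⁻¹ W(X))], the fluctuated conditional mean μ_ε := Q̄^{(A)}(X) + σ²(A,X) (𝟙{A=1}/g(1,X) − 𝟙{A=0}/g(0,X)) ε^⊤ G⁻¹ v(X), and the log-likelihood (up to ε-independent constants) ℓ(ε, O) := −(Y − μ_ε)² / (2σ²(A,X)) + ε^⊤ G⁻¹ W(X) − log Z(ε). Then for P-almost every ω, the map ε ↦ ℓ(ε, O(ω)) is differentiable at ε = 0 with gradient equal to D*(O(ω)). -/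

import Mathlib

open MeasureTheory Matrix
open scoped ENNReal

/-!
At `ε = 0` the log-likelihood splits into three gradients. In the Gaussian term the factor
`σ²(A,X)` cancels, leaving `(Y − Q̄^{(A)}) (𝟙{A=1}/g(1,X) − 𝟙{A=0}/g(0,X)) G⁻¹ v(X) = Δ* G⁻¹ v(X)`;
the linear term contributes `G⁻¹ W(X)`; and `log Z` is the cumulant generating function of
`G⁻¹ W(X)`, whose gradient at `0` is the mean `G⁻¹ E[W(X)]`. This mean vanishes: `β₀` solves the
normal equations `G β₀ = E[Ψ v]`, so the residual `Ψ − β₀ᵀ v` is orthogonal to `v`. The sum is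
`G⁻¹ (Δ* + Ψ − β₀ᵀ v) v = D*`. Differentiating `Z` under the integral needs `W` bounded, which
follows from `|Q̄^{(a)}| ≤ sup |Y| / δ`.
-/

noncomputable def dotProductCLM {ι : Type*} [Fintype ι] : (ι → ℝ) →L[ℝ] (ι → ℝ) →L[ℝ] ℝ :=
  LinearMap.toContinuousLinearMap
    (LinearMap.toContinuousLinearMap.toLinearMap ∘ₗ (dotProductBilin ℝ ℝ).flip)

@[simp] lemma dotProductCLM_apply {ι : Type*} [Fintype ι] (d u : ι → ℝ) :
    dotProductCLM d u = u ⬝ᵥ d := rfl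

lemma hasFDerivAt_gaussianLogDensity_fluctuation {ι : Type*} [Fintype ι] (y m s h : ℝ)
    (b : ι → ℝ) (hs : s ≠ 0) :
    HasFDerivAt (fun ε : ι → ℝ => -(y - (m + s * h * (ε ⬝ᵥ b))) ^ 2 / (2 * s))
      (((y - m) * h) • dotProductCLM b) 0 := by
  have h1 : HasDerivAt (fun t : ℝ => -(y - (m + s * h * t)) ^ 2 / (2 * s)) ((y - m) * h) 0 :=
    ((((hasDerivAt_id (0 : ℝ)).const_mul (s * h)).const_add m).const_sub y).pow 2
      |>.neg.div_const (2 * s) |>.congr_deriv (by simp only [id]; field_simp; ring)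
  rw [← map_zero (dotProductCLM b)] at h1
  exact h1.comp_hasFDerivAt (0 : ι → ℝ) (dotProductCLM b).hasFDerivAt

lemma hasFDerivAt_fluctuatedLogLikelihood {ι : Type*} [Fintype ι]
    (y m s h : ℝ) (b w : ι → ℝ) {Z : (ι → ℝ) → ℝ} (hs : s ≠ 0)
    (hZ : HasFDerivAt (fun ε => Real.log (Z ε)) (0 : (ι → ℝ) →L[ℝ] ℝ) 0) :
    HasFDerivAt (fun ε : ι → ℝ =>
        -(y - (m + s * h * (ε ⬝ᵥ b))) ^ 2 / (2 * s) + ε ⬝ᵥ w - Real.log (Z ε))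
      (dotProductCLM ((h * (y - m)) • b + w)) 0 := by
  refine ((hasFDerivAt_gaussianLogDensity_fluctuation y m s h b hs).add
    (dotProductCLM w).hasFDerivAt |>.sub hZ).congr_fderiv ?_
  ext u
  simp only [_root_.sub_apply, _root_.add_apply, _root_.smul_apply, _root_.zero_apply,
    dotProductCLM_apply, dotProduct_add, dotProduct_smul, smul_eq_mul]
  ring

namespace MeasureTheory

variable {Ω : Type*} {mΩ : MeasurableSpace Ω} {P : Measure Ω}

theorem hasFDerivAt_integral_exp_apply {E : Type*} [NormedAddCommGroup E] [NormedSpace ℝ E]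
    [IsFiniteMeasure P] {φ : Ω → StrongDual ℝ E} (hφ : MemLp φ ∞ P) :
    HasFDerivAt (fun ε => ∫ ω, Real.exp (φ ω ε) ∂P) (∫ ω, φ ω ∂P) 0 := by
  set K := lpNorm φ ∞ P
  have hK : ∀ᵐ ω ∂P, ‖φ ω‖ ≤ K := ae_le_lpNorm_exponent_top hφ
  have hmeas : ∀ ε, AEStronglyMeasurable (fun ω => Real.exp (φ ω ε)) P := fun ε =>
    Real.continuous_exp.comp_aestronglyMeasurable
      ((ContinuousLinearMap.apply ℝ ℝ ε).continuous.comp_aestronglyMeasurable hφ.1)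
  have hbound : ∀ᵐ ω ∂P, ∀ ε ∈ Metric.ball (0 : E) 1,
      ‖Real.exp (φ ω ε) • φ ω‖ ≤ Real.exp K * K := by
    filter_upwards [hK] with ω hω ε hε
    have hε : ‖ε‖ ≤ 1 := (mem_ball_zero_iff.mp hε).le
    have : φ ω ε ≤ K := calc
      φ ω ε ≤ ‖φ ω‖ * ‖ε‖ := (Real.le_norm_self _).trans ((φ ω).le_opNorm ε)
      _ ≤ K := by nlinarith [norm_nonneg (φ ω), norm_nonneg ε]
    rw [norm_smul, Real.norm_eq_abs, Real.abs_exp]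
    gcongr
  simpa using hasFDerivAt_integral_of_dominated_of_fderiv_le (μ := P)
    (F' := fun ε ω => Real.exp (φ ω ε) • φ ω) (Metric.ball_mem_nhds 0 one_pos)
    (.of_forall hmeas) (by simp) (by simpa using hφ.1) hbound (integrable_const _)
    (.of_forall fun ω ε _ => (Real.hasDerivAt_exp _).comp_hasFDerivAt ε (φ ω).hasFDerivAt)

theorem hasFDerivAt_log_integral_exp_comp {E F : Type*} [NormedAddCommGroup E]
    [NormedSpace ℝ E] [NormedAddCommGroup F] [NormedSpace ℝ F] [CompleteSpace F]
    [IsProbabilityMeasure P] (T : F →L[ℝ] StrongDual ℝ E) {w : Ω → F} (hw : MemLp w ∞ P) :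
    HasFDerivAt (fun ε => Real.log (∫ ω, Real.exp (T (w ω) ε) ∂P)) (T (∫ ω, w ω ∂P)) 0 := by
  have h := (Real.hasDerivAt_log (by simp)).comp_hasFDerivAt 0
    (hasFDerivAt_integral_exp_apply (T.comp_memLp' hw))
  simp only [map_zero, Real.exp_zero, integral_const, probReal_univ, smul_eq_mul, mul_one, inv_one,
    one_smul] at h
  rw [← T.integral_comp_comm (hw.integrable le_top)]
  exact h

theorem memLp_top_condExp_of_ae_abs_le {m : MeasurableSpace Ω} {f : Ω → ℝ} {C : ℝ}
    (hf : ∀ᵐ ω ∂P, |f ω| ≤ C) : MemLp (P[f|m]) ∞ P :=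
  memLp_top_of_bound integrable_condExp.1 C (ae_bdd_abs_condExp_of_ae_bdd_abs hf)

theorem MemLp.div_of_le {f g : Ω → ℝ} (hf : MemLp f ∞ P) (hg : AEMeasurable g P) {δ : ℝ}
    (hδ : 0 < δ) (hgδ : ∀ᵐ ω ∂P, δ ≤ g ω) : MemLp (fun ω => f ω / g ω) ∞ P := by
  have hginv : MemLp (fun ω => (g ω)⁻¹) ∞ P := by
    refine memLp_top_of_bound hg.inv.aestronglyMeasurable δ⁻¹ ?_
    filter_upwards [hgδ] with ω h
    rw [norm_inv, Real.norm_of_nonneg (hδ.le.trans h)]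
    exact inv_anti₀ hδ h
  simp_rw [div_eq_mul_inv]
  exact hginv.mul hf

section Regression

variable {ι : Type*} [Fintype ι]

theorem memLp_top_of_forall_abs_apply_le {f : Ω → ι → ℝ} (hf : AEStronglyMeasurable f P) {C : ℝ}
    (hC : ∀ ω i, |f ω i| ≤ C) : MemLp f ∞ P :=
  MemLp.of_eval fun i => memLp_top_of_bound ((continuous_apply i).comp_aestronglyMeasurable hf) C
    (.of_forall fun ω => hC ω i)

theorem MemLp.sub_dotProduct_smul {f : Ω → ℝ} {V : Ω → ι → ℝ} (hf : MemLp f ∞ P)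
    (hV : MemLp V ∞ P) (β : ι → ℝ) : MemLp (fun ω => (f ω - β ⬝ᵥ V ω) • V ω) ∞ P := by
  have hβV : MemLp (fun ω => β ⬝ᵥ V ω) ∞ P := by
    simp_rw [dotProduct_comm β]
    exact (dotProductCLM β).comp_memLp' hV
  exact hV.smul (hf.sub hβV)

theorem integral_sub_dotProduct_smul_eq_zero {V : Ω → ι → ℝ} {f : Ω → ℝ} (hV : MemLp V 2 P)
    (hf : MemLp f 2 P) {β : ι → ℝ}
    (hβ : (Matrix.of fun i j => ∫ ω, V ω i * V ω j ∂P) *ᵥ β = fun i => ∫ ω, f ω * V ω i ∂P) :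
    ∫ ω, (f ω - β ⬝ᵥ V ω) • V ω ∂P = 0 := by
  have hVV : ∀ k i, Integrable (fun ω => V ω k * V ω i) P := fun k i =>
    (hV.eval k).integrable_mul (hV.eval i)
  have hfV : ∀ i, Integrable (fun ω => f ω * V ω i) P := fun i => hf.integrable_mul (hV.eval i)
  have hβV : ∀ i, Integrable (fun ω => ∑ k, β k * (V ω k * V ω i)) P := fun i =>
    integrable_finsetSum _ fun k _ => (hVV k i).const_mul _
  have hexp : ∀ i, (fun ω => ((f ω - β ⬝ᵥ V ω) • V ω) i)
      = fun ω => f ω * V ω i - ∑ k, β k * (V ω k * V ω i) := fun i => by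
    funext ω
    simp only [Pi.smul_apply, smul_eq_mul, dotProduct, sub_mul, Finset.sum_mul, mul_assoc]
  funext i
  rw [eval_integral (fun j => hexp j ▸ (hfV j).sub (hβV j)), hexp, integral_sub (hfV i) (hβV i),
    integral_finsetSum _ fun k _ => (hVV k i).const_mul _, ← congrFun hβ i]
  simp [mulVec, dotProduct, integral_const_mul, mul_comm]

end Regression

end MeasureTheory

/-- (Score of the targeted Gaussian fluctuation likelihood equals the
efficient influence function.) Assume `σ²(A,X) ≥ c > 0` a.s. With
`W(X) := (Ψ(X) − β₀ᵀ v(X)) v(X)`, `Z(ε) := E_P[exp(εᵀ G⁻¹ W(X))]`, fluctuated conditional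
mean `μ_ε := Q̄^{(A)}(X) + σ²(A,X)(𝟙{A=1}/g(1,X) − 𝟙{A=0}/g(0,X)) εᵀ G⁻¹ v(X)`, and
log-likelihood `ℓ(ε,O) := −(Y − μ_ε)²/(2σ²(A,X)) + εᵀ G⁻¹ W(X) − log Z(ε)`, for `P`-a.e.
`ω` the map `ε ↦ ℓ(ε, O(ω))` is differentiable at `ε = 0` with gradient `D*(O(ω))`. -/
theorem stmt_12
    {Ω 𝒳 : Type*} [MeasurableSpace Ω] [MeasurableSpace 𝒳]
    (P : Measure Ω) [IsProbabilityMeasure P]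
    (X : Ω → 𝒳) (hX : Measurable X)
    (A : Ω → Bool) (hA : Measurable A)
    (Y : Ω → ℝ) (hYm : Measurable Y) (hYb : ∃ C, ∀ ω, |Y ω| ≤ C)
    (mX : MeasurableSpace Ω) (hmX : mX = MeasurableSpace.comap X inferInstance)
    (g : Bool → Ω → ℝ) (hgm : ∀ a, Measurable[mX] (g a))
    (hgv : ∀ a, g a =ᵐ[P] P[fun ω => if A ω = a then (1:ℝ) else 0|mX])
    (δ : ℝ) (hδ : 0 < δ) (hgb : ∀ a, ∀ᵐ ω ∂P, δ ≤ g a ω ∧ g a ω ≤ 1 - δ)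
    (Qbar : Bool → Ω → ℝ)
    (hQbar : ∀ a ω, Qbar a ω
      = (P[fun ω' => (if A ω' = a then (1:ℝ) else 0) * Y ω'|mX]) ω / g a ω)
    (Ψ : Ω → ℝ) (hΨ : ∀ ω, Ψ ω = Qbar true ω - Qbar false ω)
    (QbarA : Ω → ℝ)
    (hQbarA : ∀ ω, QbarA ω
      = (if A ω = true then (1:ℝ) else 0) * Qbar true ω
        + (if A ω = false then (1:ℝ) else 0) * Qbar false ω)
    (Δstar : Ω → ℝ)
    (hΔstar : ∀ ω, Δstar ω
      = ((if A ω = true then (1:ℝ) else 0) / g true ω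
          - (if A ω = false then (1:ℝ) else 0) / g false ω) * (Y ω - QbarA ω))
    (σ2 : Bool → Ω → ℝ)
    (hσ2 : ∀ a ω, σ2 a ω
      = (P[fun ω' => (if A ω' = a then (1:ℝ) else 0) * (Y ω' - Qbar a ω') ^ 2|mX]) ω / g a ω)
    (σ2A : Ω → ℝ)
    (hσ2A : ∀ ω, σ2A ω
      = (if A ω = true then (1:ℝ) else 0) * σ2 true ω
        + (if A ω = false then (1:ℝ) else 0) * σ2 false ω)
    (c : ℝ) (hc : 0 < c) (hσ2c : ∀ᵐ ω ∂P, c ≤ σ2A ω)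
    {p : ℕ} (v : 𝒳 → Fin p → ℝ) (hvm : Measurable v) (hvb : ∃ C, ∀ x i, |v x i| ≤ C)
    (G : Matrix (Fin p) (Fin p) ℝ)
    (hG : G = Matrix.of fun i j => ∫ ω, v (X ω) i * v (X ω) j ∂P)
    (hGunit : IsUnit G)
    (β₀ : Fin p → ℝ) (hβ₀ : β₀ = G⁻¹ *ᵥ fun i => ∫ ω, Ψ ω * v (X ω) i ∂P)
    (Dstar : Ω → Fin p → ℝ)
    (hDstar : ∀ ω, Dstar ω
      = G⁻¹ *ᵥ fun i => (Δstar ω + Ψ ω - β₀ ⬝ᵥ v (X ω)) * v (X ω) i)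
    (W : Ω → Fin p → ℝ)
    (hW : ∀ ω, W ω = fun i => (Ψ ω - β₀ ⬝ᵥ v (X ω)) * v (X ω) i)
    (Z : (Fin p → ℝ) → ℝ)
    (hZ : ∀ ε, Z ε = ∫ ω, Real.exp (ε ⬝ᵥ (G⁻¹ *ᵥ W ω)) ∂P)
    (μfl : (Fin p → ℝ) → Ω → ℝ)
    (hμfl : ∀ ε ω, μfl ε ω
      = QbarA ω + σ2A ω *
          ((if A ω = true then (1:ℝ) else 0) / g true ω
            - (if A ω = false then (1:ℝ) else 0) / g false ω) *
          (ε ⬝ᵥ (G⁻¹ *ᵥ v (X ω))))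
    (ℓ : (Fin p → ℝ) → Ω → ℝ)
    (hℓ : ∀ ε ω, ℓ ε ω
      = -(Y ω - μfl ε ω) ^ 2 / (2 * σ2A ω) + ε ⬝ᵥ (G⁻¹ *ᵥ W ω) - Real.log (Z ε)) :
    ∀ᵐ ω ∂P, ∃ L : (Fin p → ℝ) →L[ℝ] ℝ,
      HasFDerivAt (fun ε => ℓ ε ω) L 0 ∧ ∀ u, L u = u ⬝ᵥ Dstar ω := by
  obtain ⟨C, hC⟩ := hYb
  obtain ⟨Cv, hCv⟩ := hvb
  have hvX : MemLp (fun ω => v (X ω)) ∞ P :=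
    memLp_top_of_forall_abs_apply_le (hvm.comp hX).aestronglyMeasurable fun ω => hCv (X ω)
  have hQbar_mem : ∀ a, MemLp (Qbar a) ∞ P := fun a => by
    rw [funext (hQbar a)]
    refine MemLp.div_of_le (memLp_top_condExp_of_ae_abs_le (C := C) (.of_forall fun ω => ?_))
      ((hgm a).mono (hmX ▸ hX.comap_le) le_rfl).aemeasurable hδ ((hgb a).mono fun _ h => h.1)
    split_ifs <;> simp [hC ω, (abs_nonneg _).trans (hC ω)]
  have hΨ_mem : MemLp Ψ ∞ P := funext hΨ ▸ (hQbar_mem true).sub (hQbar_mem false)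
  have hW_eq : W = fun ω => (Ψ ω - β₀ ⬝ᵥ v (X ω)) • v (X ω) := funext hW
  have hW_int : ∫ ω, W ω ∂P = 0 := by
    refine hW_eq ▸ integral_sub_dotProduct_smul_eq_zero (hvX.mono_exponent le_top)
      (hΨ_mem.mono_exponent le_top) ?_
    rw [← hG, hβ₀, mulVec_mulVec, mul_nonsing_inv _ ((isUnit_iff_isUnit_det G).mp hGunit),
      one_mulVec]
  have hlogZ : HasFDerivAt (fun ε => Real.log (Z ε)) (0 : (Fin p → ℝ) →L[ℝ] ℝ) 0 := by
    have h := hasFDerivAt_log_integral_exp_comp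
      (dotProductCLM.comp (mulVecLin G⁻¹).toContinuousLinearMap)
      (hW_eq ▸ hΨ_mem.sub_dotProduct_smul hvX β₀)
    rw [hW_int, map_zero] at h
    simp only [hZ]
    exact h
  filter_upwards [hσ2c] with ω hσ
  refine ⟨dotProductCLM (Dstar ω), ?_, fun u => rfl⟩
  have hD : Dstar ω = G⁻¹ *ᵥ (Δstar ω • v (X ω) + W ω) := by
    rw [hDstar, hW]
    congr 1
    funext i
    simp only [Pi.add_apply, Pi.smul_apply, smul_eq_mul]
    ring
  simp only [hℓ, hμfl]
  rw [hD, mulVec_add, mulVec_smul, hΔstar]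
  exact hasFDerivAt_fluctuatedLogLikelihood _ _ _ _ _ _
    (hc.trans_le hσ).ne' hlogZ
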